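/- Let n ≥ 1 and K ⊆ {1,…,n}, and set K^∨ = {1,…,n} ∖ K. Let w₀ be the permutation of ℤ with w₀(x) = −x for |x| ≤ n and w₀(x) = x for |x| > n. Then the permutation (w_{K^∨})⁻¹ · w₀ · w_K maps {1,…,n} onto {1,…,n}; that is, w₀ w_K and w_{K^∨} lie in the same left coset of the subgroup W_J = {σ : σ(−x) = −σ(x) for all x, σ(x) = x for |x| > n, and σ({1,…,n}) = {1,…,n}}. -/

import Mathlib

/-!
The set `([1, n] ∖ K) ∪ (-K)` is the image of `[1, n]` under `w_K`. Indeed, if `k` exceeds every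
element of `K`, then on `[1, n] ∪ (-K)` the signed cycle `c_k` fixes `[1, k)` and `-K`, shifts
`[k, n)` up by one and sends `n` to `-k`, so it carries the set for `K` to the set for
`K ∪ {k}`. Since `w₀` acts as `x ↦ -x` on `[-n, n]`, it carries the set for `K` to the set for
`K^∨`, which `w_{K^∨}⁻¹` maps back onto `[1, n]`.
-/

/-- The signed permutation `s_i` of `ℤ`, swapping `i ↔ i+1` and `-i ↔ -(i+1)`. -/
def sPerm (i : ℤ) : Equiv.Perm ℤ :=
  Equiv.swap i (i + 1) * Equiv.swap (-i) (-(i + 1))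

/-- The permutation `t` of `ℤ`, swapping `n ↔ -n`. -/
def tPerm (n : ℕ) : Equiv.Perm ℤ :=
  Equiv.swap (n : ℤ) (-(n : ℤ))

/-- `c_k = s_k s_{k+1} ⋯ s_{n-1} t`. -/
def cPerm (n k : ℕ) : Equiv.Perm ℤ :=
  (((List.range (n - k)).map (fun j => sPerm ((k : ℤ) + (j : ℤ)))).prod) * tPerm n

/-- `w_K`: product of the `c_k`, `k ∈ K`, in decreasing order of `k`. -/
def wPerm (n : ℕ) (K : Finset ℕ) : Equiv.Perm ℤ :=
  (((K.sort (· ≤ ·)).reverse).map (cPerm n)).prod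
/-- The longest element `w₀`: `x ↦ -x` for `|x| ≤ n`, identity elsewhere. -/
def w0Perm (n : ℕ) : Equiv.Perm ℤ where
  toFun x := if x.natAbs ≤ n then -x else x
  invFun x := if x.natAbs ≤ n then -x else x
  left_inv x := by
    by_cases h : x.natAbs ≤ n
    · simp [h, Int.natAbs_neg]
    · simp [h]
  right_inv x := by
    by_cases h : x.natAbs ≤ n
    · simp [h, Int.natAbs_neg]
    · simp [h]


lemma sPerm_apply {i : ℤ} (hi : 1 ≤ i) (x : ℤ) :
    sPerm i x = if x = i then i + 1 else if x = i + 1 then i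
      else if x = -i then -(i + 1) else if x = -(i + 1) then -i else x := by
  simp only [sPerm, Equiv.Perm.mul_apply, Equiv.swap_apply_def]
  split_ifs <;> omega

lemma sPerm_neg {i : ℤ} (hi : 1 ≤ i) (x : ℤ) : sPerm i (-x) = -sPerm i x := by
  rw [sPerm_apply hi, sPerm_apply hi]
  split_ifs <;> omega

lemma tPerm_neg (n : ℕ) (x : ℤ) : tPerm n (-x) = -tPerm n x := by
  simp only [tPerm, Equiv.swap_apply_def]
  split_ifs <;> omega

/-- `s_a s_{a+1} ⋯ s_{a+m-1}`. -/
def sProd (a : ℤ) (m : ℕ) : Equiv.Perm ℤ :=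
  ((List.range m).map (fun j => sPerm (a + j))).prod

lemma cPerm_eq_sProd_mul (n k : ℕ) : cPerm n k = sProd k (n - k) * tPerm n := rfl

lemma sProd_zero (a : ℤ) : sProd a 0 = 1 := rfl

lemma sProd_succ (a : ℤ) (m : ℕ) : sProd a (m + 1) = sProd a m * sPerm (a + m) := by
  simp [sProd, List.range_succ]

lemma sProd_neg {a : ℤ} (ha : 1 ≤ a) (m : ℕ) (x : ℤ) : sProd a m (-x) = -sProd a m x := by
  induction m generalizing x with
  | zero => rfl
  | succ m ih =>
    simp only [sProd_succ, Equiv.Perm.mul_apply, sPerm_neg (by omega : 1 ≤ a + m), ih]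

lemma sProd_apply_of_pos {a : ℤ} (ha : 1 ≤ a) (m : ℕ) {x : ℤ} (hx : 1 ≤ x) :
    sProd a m x = if x = a + m then a else if a ≤ x ∧ x < a + m then x + 1 else x := by
  induction m generalizing x with
  | zero => simp only [sProd_zero, Equiv.Perm.one_apply]; split_ifs <;> omega
  | succ m ih =>
    rw [sProd_succ, Equiv.Perm.mul_apply, sPerm_apply (by omega)]
    push_cast
    by_cases h1 : x = a + m
    · rw [if_pos h1, ih (by omega)]
      split_ifs <;> omega
    by_cases h2 : x = a + m + 1
    · rw [if_neg h1, if_pos h2, ih (by omega)]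
      split_ifs <;> omega
    rw [if_neg h1, if_neg h2, if_neg (by omega), if_neg (by omega), ih hx]
    split_ifs <;> omega

lemma cPerm_neg {n k : ℕ} (hk : 1 ≤ k) (x : ℤ) : cPerm n k (-x) = -cPerm n k x := by
  rw [cPerm_eq_sProd_mul, Equiv.Perm.mul_apply, Equiv.Perm.mul_apply, tPerm_neg,
    sProd_neg (by exact_mod_cast hk)]

lemma cPerm_apply_of_mem_Icc {n k : ℕ} (hk : 1 ≤ k) (hkn : k ≤ n) {x : ℤ} (hx : 1 ≤ x)
    (hxn : x ≤ n) :
    cPerm n k x = if x = n then -(k : ℤ) else if k ≤ x ∧ x < n then x + 1 else x := by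
  have hk' : (1 : ℤ) ≤ k := by exact_mod_cast hk
  have hnk : (k : ℤ) + ((n - k : ℕ) : ℤ) = n := by omega
  rw [cPerm_eq_sProd_mul, Equiv.Perm.mul_apply, tPerm, Equiv.swap_apply_def]
  by_cases hxn' : x = n
  · rw [if_pos hxn', if_pos hxn', ← hnk, sProd_neg hk', sProd_apply_of_pos hk' _ (by omega),
      if_pos rfl]
  · rw [if_neg hxn', if_neg (by omega), sProd_apply_of_pos hk' _ hx, hnk, if_neg hxn', if_neg hxn']

/-- `([1, n] ∖ K) ∪ (-K)`. -/
def signedSet (n : ℕ) (K : Finset ℕ) : Set ℤ :=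
  {x | (1 ≤ x ∧ x ≤ n ∧ ∀ j ∈ K, (j : ℤ) ≠ x) ∨ ∃ j ∈ K, (j : ℤ) = -x}

lemma signedSet_empty (n : ℕ) : signedSet n ∅ = Set.Icc (1 : ℤ) n := by
  ext x
  simp [signedSet]

lemma cPerm_image_signedSet {n k : ℕ} (hk : 1 ≤ k) (hkn : k ≤ n) {K : Finset ℕ}
    (hK : ∀ j ∈ K, 1 ≤ j ∧ j < k) :
    cPerm n k '' signedSet n K = signedSet n (insert k K) := by
  have hc := @cPerm_apply_of_mem_Icc n k hk hkn
  have hfix : ∀ j ∈ K, cPerm n k (-(j : ℤ)) = -(j : ℤ) := fun j hj => by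
    have := hK j hj
    rw [cPerm_neg hk, hc (by omega) (by omega), if_neg (by omega), if_neg (by omega)]
  ext y
  simp only [signedSet, Set.mem_image, Set.mem_ofPred_eq, Finset.forall_mem_insert,
    Finset.exists_mem_insert]
  constructor
  · rintro ⟨x, ⟨hx1, hxn, hxK⟩ | ⟨j, hj, hjx⟩, rfl⟩
    · rw [hc hx1 hxn]
      split_ifs with h h'
      · exact Or.inr (Or.inl (by omega))
      · exact Or.inl ⟨by omega, by omega, by omega, fun j hj => by have := hK j hj; omega⟩
      · exact Or.inl ⟨hx1, hxn, by omega, hxK⟩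
    · rw [show x = -(j : ℤ) by omega, hfix j hj]
      exact Or.inr (Or.inr ⟨j, hj, (neg_neg _).symm⟩)
  · rintro (⟨hy1, hyn, hyk, hyK⟩ | hyk | ⟨j, hj, hjy⟩)
    · by_cases hlt : y < k
      · exact ⟨y, Or.inl ⟨hy1, hyn, hyK⟩, by rw [hc hy1 hyn, if_neg (by omega), if_neg (by omega)]⟩
      · refine ⟨y - 1, Or.inl ⟨by omega, by omega, fun j hj => ?_⟩, ?_⟩
        · have := hK j hj
          omega
        · rw [hc (by omega) (by omega), if_neg (by omega), if_pos (by omega), sub_add_cancel]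
    · refine ⟨n, Or.inl ⟨by omega, le_rfl, fun j hj => ?_⟩, ?_⟩
      · have := hK j hj
        omega
      · rw [hc (by omega) le_rfl, if_pos rfl]
        omega
    · refine ⟨y, Or.inr ⟨j, hj, hjy⟩, ?_⟩
      rw [show y = -(j : ℤ) by omega, hfix j hj]

lemma Finset.sort_insert_of_forall_lt {α : Type*} [LinearOrder α] {s : Finset α} {a : α}
    (hs : ∀ b ∈ s, b < a) : (insert a s).sort = s.sort ++ [a] := by
  refine (Finset.sortedLT_sort _).eq_of_mem_iff ?_ fun b => ?_
  · rw [List.sortedLT_iff_pairwise, List.pairwise_append]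
    exact ⟨(Finset.sortedLT_sort s).pairwise, List.pairwise_singleton _ _,
      fun b hb c hc => by simp_all⟩
  · simp [or_comm]

lemma wPerm_insert_of_forall_lt (n : ℕ) {K : Finset ℕ} {k : ℕ} (hK : ∀ j ∈ K, j < k) :
    wPerm n (insert k K) = cPerm n k * wPerm n K := by
  rw [wPerm, wPerm, Finset.sort_insert_of_forall_lt hK, List.reverse_append, List.reverse_singleton,
    List.singleton_append, List.map_cons, List.prod_cons]

lemma wPerm_image_Icc {n : ℕ} {K : Finset ℕ} (hK : K ⊆ Finset.Icc 1 n) :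
    wPerm n K '' Set.Icc (1 : ℤ) n = signedSet n K := by
  induction K using Finset.induction_on_max with
  | empty => simp [wPerm, signedSet_empty]
  | insert k K hlt ih =>
    have hk := Finset.mem_Icc.mp (hK (Finset.mem_insert_self k K))
    have hKn : K ⊆ Finset.Icc 1 n := (Finset.subset_insert k K).trans hK
    rw [wPerm_insert_of_forall_lt n hlt, Equiv.Perm.coe_mul, Set.image_comp, ih hKn,
      cPerm_image_signedSet hk.1 hk.2]
    exact fun j hj => ⟨(Finset.mem_Icc.mp (hKn hj)).1, hlt j hj⟩

lemma neg_mem_signedSet_sdiff {n : ℕ} {K : Finset ℕ} (hK : K ⊆ Finset.Icc 1 n) {x : ℤ} :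
    -x ∈ signedSet n (Finset.Icc 1 n \ K) ↔ x ∈ signedSet n K := by
  simp only [signedSet, Set.mem_ofPred_eq, Finset.mem_sdiff, Finset.mem_Icc]
  constructor
  · rintro (⟨h1, h2, hne⟩ | ⟨j, ⟨hj, hjK⟩, hjx⟩)
    · refine Or.inr ⟨(-x).toNat, ?_, by omega⟩
      by_contra h
      exact hne _ ⟨⟨by omega, by omega⟩, h⟩ (by omega)
    · refine Or.inl ⟨by omega, by omega, fun i hi hix => hjK ?_⟩
      rwa [show j = i by omega]
  · rintro (⟨h1, h2, hne⟩ | ⟨j, hj, hjx⟩)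
    · exact Or.inr ⟨x.toNat, ⟨⟨by omega, by omega⟩, fun h => hne _ h (by omega)⟩, by omega⟩
    · have := Finset.mem_Icc.mp (hK hj)
      refine Or.inl ⟨by omega, by omega, fun i ⟨_, hiK⟩ hix => hiK ?_⟩
      rwa [show i = j by omega]

lemma natAbs_le_of_mem_signedSet {n : ℕ} {K : Finset ℕ} (hK : K ⊆ Finset.Icc 1 n) {x : ℤ}
    (hx : x ∈ signedSet n K) : x.natAbs ≤ n := by
  rcases hx with ⟨h1, h2, -⟩ | ⟨j, hj, hjx⟩
  · omega
  · have := Finset.mem_Icc.mp (hK hj)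
    omega

lemma w0Perm_image_signedSet {n : ℕ} {K : Finset ℕ} (hK : K ⊆ Finset.Icc 1 n) :
    w0Perm n '' signedSet n K = signedSet n (Finset.Icc 1 n \ K) := by
  ext y
  rw [Equiv.image_eq_preimage_symm, Set.mem_preimage]
  by_cases hy : y.natAbs ≤ n
  · rw [show (w0Perm n).symm y = -y from if_pos hy, ← neg_mem_signedSet_sdiff hK, neg_neg]
  · rw [show (w0Perm n).symm y = y from if_neg hy]
    exact iff_of_false (hy ∘ natAbs_le_of_mem_signedSet hK)
      (hy ∘ natAbs_le_of_mem_signedSet Finset.sdiff_subset)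

theorem stmt4_general (n : ℕ) (K : Finset ℕ) (hK : K ⊆ Finset.Icc 1 n) :
    (fun x => ((wPerm n (Finset.Icc 1 n \ K))⁻¹ * w0Perm n * wPerm n K) x) ''
        Set.Icc (1 : ℤ) (n : ℤ)
      = Set.Icc (1 : ℤ) (n : ℤ) := by
  have hKc : Finset.Icc 1 n \ K ⊆ Finset.Icc 1 n := Finset.sdiff_subset
  rw [Equiv.Perm.coe_mul, Equiv.Perm.coe_mul, Set.image_comp, Set.image_comp, wPerm_image_Icc hK,
    w0Perm_image_signedSet hK, ← wPerm_image_Icc hKc, ← Set.image_comp, ← Equiv.Perm.coe_mul,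
    inv_mul_cancel, Equiv.Perm.coe_one, Set.image_id]

theorem stmt4 (n : ℕ) (hn : 1 ≤ n) (K : Finset ℕ) (hK : K ⊆ Finset.Icc 1 n) :
    (fun x => ((wPerm n (Finset.Icc 1 n \ K))⁻¹ * w0Perm n * wPerm n K) x) ''
        Set.Icc (1 : ℤ) (n : ℤ)
      = Set.Icc (1 : ℤ) (n : ℤ) :=
  stmt4_general n K hK
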